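/- For every freely reduced word z of length 2 over A, the set of all cyclically reduced words in U_r that contain z as a subword is exponentially generic in U_r. -/

import Mathlib

open scoped Classical

noncomputable section

/-- The free group of rank `r`, with free basis indexed by `Fin r`. -/
abbrev F (r : ℕ) := FreeGroup (Fin r)

/-- The freely reduced length of an element of the free group. -/
def wlen {r : ℕ} (w : F r) : ℕ := (FreeGroup.toWord w).length

/-- An element is cyclically reduced if the first letter of its reduced word is not the
inverse of the last letter. -/
def CyclicallyReduced {r : ℕ} (w : F r) : Prop :=
  ∀ x ∈ (FreeGroup.toWord w).head?, ∀ y ∈ (FreeGroup.toWord w).getLast?, x ≠ (y.1, !y.2)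

/-- The set of cyclically reduced elements of `F r`. -/
def Ur (r : ℕ) : Set (F r) := {w | CyclicallyReduced w}

/-- An element of a group is primitive if it belongs to some free basis of the group. -/
def IsPrimitive {G : Type} [Group G] (g : G) : Prop :=
  ∃ (ι : Type) (b : FreeGroupBasis ι G) (i : ι), b i = g

/-- `HasRank G n` says that `G` is free of rank `n` (with `n = ⊤` for infinite rank). -/
def HasRank (G : Type) [Group G] (n : ℕ∞) : Prop :=
  ∃ (ι : Type) (_b : FreeGroupBasis ι G), Cardinal.toENat (Cardinal.mk ι) = n

/-- The primitivity rank of `g`: the smallest rank of a subgroup containing `g` as a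
non-primitive element (`⊤ = ∞` if there is none). -/
def primitivityRank {r : ℕ} (g : F r) : ℕ∞ :=
  sInf {n : ℕ∞ | ∃ (H : Subgroup (F r)) (hg : g ∈ H),
    ¬ IsPrimitive (⟨g, hg⟩ : H) ∧ HasRank H n}

/-- The critical set of `g`: subgroups containing `g` as a non-primitive element whose rank
equals the primitivity rank of `g`. -/
def Crit {r : ℕ} (g : F r) : Set (Subgroup (F r)) :=
  {H | ∃ hg : g ∈ H, ¬ IsPrimitive (⟨g, hg⟩ : H) ∧ HasRank H (primitivityRank g)}

/-- `gam S n` is the number of elements of `S` of reduced length exactly `n`. -/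
def gam {r : ℕ} (S : Set (F r)) (n : ℕ) : ℕ := {w ∈ S | wlen w = n}.ncard

/-- `rho S n` is the number of elements of `S` of reduced length at most `n`. -/
def rho {r : ℕ} (S : Set (F r)) (n : ℕ) : ℕ := {w ∈ S | wlen w ≤ n}.ncard

/-- A sequence of reals converges to `l` exponentially fast. -/
def ExpFast (x : ℕ → ℝ) (l : ℝ) : Prop :=
  ∃ C : ℝ, 0 < C ∧ ∃ σ : ℝ, 0 < σ ∧ σ < 1 ∧ ∀ n : ℕ, |x n - l| ≤ C * σ ^ n

/-- `S` is exponentially negligible in `Z`. -/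
def ExpNegligibleIn {r : ℕ} (S Z : Set (F r)) : Prop :=
  ExpFast (fun n => (rho S n : ℝ) / (rho Z n : ℝ)) 0

/-- `S` is exponentially generic in `Z`. -/
def ExpGenericIn {r : ℕ} (S Z : Set (F r)) : Prop :=
  ExpNegligibleIn (Z \ S) Z

/-!
Reduced words avoiding `x y` are the walks in the graph on the `2r` letters in which `a → b` is
an edge unless `b = a⁻¹` or `a b = x y`. Every letter has at most `q = 2r - 1` successors, `x`
has at most `q - 1`, and all letters but `x` and `x⁻¹` have `x` as a successor. Hence at most
`q³ - 1` walks of length three leave any letter, and such words of length `n` number `O(μⁿ)`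
with `μ = (q³ - 1)^(1/3) < q`. On the other hand every reduced word of length `n` (there are at
least `qⁿ`) extends by one letter to a cyclically reduced word, so the ratio in question is
`O((μ / q)ⁿ)`.
-/

open Finset FreeGroup

lemma Finset.sum_add_le_card_mul {ι : Type*} {s : Finset ι} {f : ι → ℕ} {B d : ℕ} {i₀ : ι}
    (hi₀ : i₀ ∈ s) (hf : ∀ i ∈ s, f i ≤ B) (hd : f i₀ + d ≤ B) : ∑ i ∈ s, f i + d ≤ #s * B := by
  rw [← add_sum_erase s f hi₀, ← card_erase_add_one hi₀, add_one_mul]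
  have : ∑ i ∈ s.erase i₀, f i ≤ #(s.erase i₀) * B :=
    smul_eq_mul (α := ℕ) _ _ ▸ sum_le_card_nsmul _ _ _ fun i hi => hf i (mem_of_mem_erase hi)
  omega

section Walks

variable {β : Type*} [Fintype β] (R : β → β → Prop)

variable (β) in
def wordsOfLength (n : ℕ) : Finset (List β) := (List.finite_length_eq β n).toFinset

def chainsOfLength (n : ℕ) : Finset (List β) := {L ∈ wordsOfLength β n | L.IsChain R}

def walksFrom (h : β) (n : ℕ) : Finset (List β) := {S ∈ wordsOfLength β n | (h :: S).IsChain R}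

variable {R}

@[simp]
lemma mem_wordsOfLength {n : ℕ} {L : List β} : L ∈ wordsOfLength β n ↔ L.length = n := by
  simp [wordsOfLength]

@[simp]
lemma mem_chainsOfLength {n : ℕ} {L : List β} :
    L ∈ chainsOfLength R n ↔ L.length = n ∧ L.IsChain R := by
  simp [chainsOfLength]

@[simp]
lemma mem_walksFrom {h : β} {n : ℕ} {S : List β} :
    S ∈ walksFrom R h n ↔ S.length = n ∧ (h :: S).IsChain R := by
  simp [walksFrom]

lemma walksFrom_zero (h : β) : walksFrom R h 0 = {[]} := by
  ext S
  rw [mem_walksFrom, mem_singleton, List.length_eq_zero_iff]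
  exact ⟨And.left, fun hS => ⟨hS, hS ▸ List.isChain_singleton h⟩⟩

lemma card_walksFrom_succ (h : β) (n : ℕ) :
    #(walksFrom R h (n + 1)) = ∑ c with R h c, #(walksFrom R c n) := by
  have : walksFrom R h (n + 1) =
      ({c | R h c} : Finset β).biUnion fun c => (walksFrom R c n).image (c :: ·) := by
    ext (_ | ⟨c, S⟩) <;> simp [List.isChain_cons_cons, and_left_comm]
  rw [this, card_biUnion]
  · exact sum_congr rfl fun c _ => card_image_of_injective _ (List.cons_injective)
  · intro c _ d _ hcd
    simp only [Function.onFun, disjoint_left, mem_image]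
    rintro _ ⟨S, -, rfl⟩ ⟨T, -, hT⟩
    exact hcd (List.cons_eq_cons.1 hT).1.symm

lemma card_walksFrom_le {q : ℕ} (hdeg : ∀ a, #{b | R a b} ≤ q) (h : β) (n : ℕ) :
    #(walksFrom R h n) ≤ q ^ n := by
  induction n generalizing h with
  | zero => simp [walksFrom_zero]
  | succ n ih =>
    rw [card_walksFrom_succ, pow_succ']
    refine (sum_le_card_nsmul _ _ _ fun c _ => ih c).trans ?_
    rw [smul_eq_mul]
    exact Nat.mul_le_mul_right _ (hdeg h)

lemma pow_le_card_walksFrom {q : ℕ} (hdeg : ∀ a, q ≤ #{b | R a b}) (h : β) (n : ℕ) :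
    q ^ n ≤ #(walksFrom R h n) := by
  induction n generalizing h with
  | zero => simp [walksFrom_zero]
  | succ n ih =>
    rw [card_walksFrom_succ, pow_succ']
    exact (Nat.mul_le_mul_right _ (hdeg h)).trans
      (smul_eq_mul (α := ℕ) _ _ ▸ card_nsmul_le_sum _ _ _ fun c _ => ih c)

lemma walksFrom_subset_chainsOfLength (h : β) (n : ℕ) :
    walksFrom R h n ⊆ chainsOfLength R n := fun _ hS =>
  mem_chainsOfLength.2 ⟨(mem_walksFrom.1 hS).1, (mem_walksFrom.1 hS).2.tail⟩

/-- Two-step walks from a `c` with `R c x` may pass through `x`, whose deficit gives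
`#(walksFrom R c 2) < q²`; if no successor `c` of `h` has `R c x`, then `h` has at most two
successors, and `2 q² < q³`. -/
lemma card_walksFrom_three_add_one_le {q : ℕ} (hq : 3 ≤ q) (hdeg : ∀ a, #{b | R a b} ≤ q)
    {x : β} (hx : #{b | R x b} + 1 ≤ q) (hpred : #{c | ¬ R c x} ≤ 2) (h : β) :
    #(walksFrom R h 3) + 1 ≤ q ^ 3 := by
  have hwalk1 : ∀ b, #(walksFrom R b 1) = #{c | R b c} := fun b => by
    simp [card_walksFrom_succ, walksFrom_zero]
  have hwalk2 : ∀ c, R c x → #(walksFrom R c 2) + 1 ≤ q ^ 2 := fun c hcx => by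
    rw [card_walksFrom_succ, sq]
    refine (sum_add_le_card_mul (mem_filter.2 ⟨mem_univ _, hcx⟩)
      (fun b _ => (hwalk1 b).trans_le (hdeg b)) ((hwalk1 x).symm ▸ hx)).trans ?_
    exact Nat.mul_le_mul_right _ (hdeg c)
  rw [card_walksFrom_succ]
  by_cases hgood : ∃ c, R h c ∧ R c x
  · obtain ⟨c, hhc, hcx⟩ := hgood
    calc ∑ c with R h c, #(walksFrom R c 2) + 1 ≤ #{c | R h c} * q ^ 2 :=
          sum_add_le_card_mul (mem_filter.2 ⟨mem_univ _, hhc⟩)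
            (fun c _ => card_walksFrom_le hdeg c 2) (hwalk2 c hcx)
      _ ≤ q ^ 3 := by rw [pow_succ' q 2]; exact Nat.mul_le_mul_right _ (hdeg h)
  · push Not at hgood
    have hsub : ({c | R h c} : Finset β) ⊆ ({c | ¬ R c x} : Finset β) := fun c hc => by
      simp only [mem_filter, mem_univ, true_and] at hc ⊢
      exact hgood c hc
    calc ∑ c with R h c, #(walksFrom R c 2) + 1 ≤ #{c | R h c} * q ^ 2 + 1 := by
          grw [sum_le_card_nsmul _ _ _ fun c _ => card_walksFrom_le hdeg c 2, smul_eq_mul]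
      _ ≤ 2 * q ^ 2 + 1 := by grw [card_le_card hsub, hpred]
      _ ≤ q ^ 3 := by nlinarith

/-- A chain of length `m + k` is its first `m` letters followed by a walk of length `k` from the
`m`-th letter. -/
lemma card_chainsOfLength_add_le {k M : ℕ} (hM : ∀ h, #(walksFrom R h k) ≤ M) {m : ℕ}
    (hm : m ≠ 0) : #(chainsOfLength R (m + k)) ≤ M * #(chainsOfLength R m) := by
  refine card_le_mul_card_image_of_maps_to (f := List.take m) (fun L hL => ?_) M fun T hT => ?_
  · rw [mem_chainsOfLength] at hL ⊢
    exact ⟨by simp [hL.1], hL.2.take m⟩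
  · obtain ⟨hTlen, -⟩ := mem_chainsOfLength.1 hT
    obtain rfl | ⟨T, h, rfl⟩ := T.eq_nil_or_concat'
    · exact absurd (by simpa using hTlen.symm) hm
    refine (card_le_card_of_injOn (List.drop m) (fun L hL => ?_) ?_).trans (hM h)
    · obtain ⟨hL, hLT⟩ := mem_filter.1 hL
      obtain ⟨hLlen, hL⟩ := mem_chainsOfLength.1 hL
      rw [← List.take_append_drop m L, hLT, List.isChain_append] at hL
      simp only [List.getLast?_concat, Option.mem_def, Option.some.injEq, forall_eq'] at hL
      exact mem_walksFrom.2 ⟨by simp [hLlen], List.isChain_cons.2 ⟨hL.2.2, hL.2.1⟩⟩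
    · intro L hL L' hL' hdrop
      simp only [coe_filter, Set.mem_ofPred_eq] at hL hL'
      rw [← List.take_append_drop m L, ← List.take_append_drop m L', hL.2, hL'.2, hdrop]

end Walks

lemma le_sum_mul_pow_of_add_le {a : ℕ → ℕ} {k M : ℕ} {μ : ℝ} (hk : 0 < k) (hμ : 1 ≤ μ)
    (hM : (M : ℝ) ≤ μ ^ k) (hstep : ∀ n, n ≠ 0 → a (n + k) ≤ M * a n) (n : ℕ) :
    (a n : ℝ) ≤ (∑ j ∈ range (k + 1), a j : ℕ) * μ ^ n := by
  induction n using Nat.strong_induction_on with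
  | _ n ih =>
    rcases le_or_gt n k with hn | hn
    · calc (a n : ℝ) ≤ (∑ j ∈ range (k + 1), a j : ℕ) := by
            exact_mod_cast single_le_sum (fun j _ => Nat.zero_le (a j)) (mem_range.2 (by omega))
        _ ≤ _ := le_mul_of_one_le_right (by positivity) (one_le_pow₀ hμ)
    · obtain ⟨m, rfl⟩ : ∃ m, n = m + k := ⟨n - k, by omega⟩
      calc (a (m + k) : ℝ) ≤ M * a m := by exact_mod_cast hstep m (by omega)
        _ ≤ μ ^ k * ((∑ j ∈ range (k + 1), a j : ℕ) * μ ^ m) :=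
            mul_le_mul hM (ih m (by omega)) (by positivity) (by positivity)
        _ = _ := by ring

lemma sum_range_succ_pow_le {μ : ℝ} (hμ : 1 < μ) (n : ℕ) :
    ∑ j ∈ range (n + 1), μ ^ j ≤ μ / (μ - 1) * μ ^ n := by
  rw [geom_sum_eq hμ.ne', div_mul_eq_mul_div, ← pow_succ']
  gcongr
  linarith

lemma exists_one_lt_lt_pow_eq {M q : ℝ} {k : ℕ} (hk : k ≠ 0) (hM : 1 < M) (hMq : M < q ^ k)
    (hq : 0 ≤ q) : ∃ μ, 1 < μ ∧ μ < q ∧ μ ^ k = M := by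
  have hroot := Real.rpow_inv_natCast_pow (x := M) (by linarith) hk
  exact ⟨M ^ (k⁻¹ : ℝ), Real.one_lt_rpow hM (by positivity),
    lt_of_pow_lt_pow_left₀ k hq (by rwa [hroot]), hroot⟩

/-- `FreeGroup.IsReduced L` says that `L` is a chain of this relation. -/
def IsReducedStep {α : Type*} (a b : α × Bool) : Prop := a.1 = b.1 → a.2 = b.2

lemma isReducedStep_iff_ne {α : Type*} (a b : α × Bool) :
    IsReducedStep a b ↔ b ≠ (a.1, !a.2) := by
  unfold IsReducedStep
  obtain ⟨a₁, a₂⟩ := a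
  obtain ⟨b₁, b₂⟩ := b
  cases a₂ <;> cases b₂ <;> simp [@eq_comm _ a₁]

lemma eq_inv_letter_comm {α : Type*} {a b : α × Bool} : b = (a.1, !a.2) ↔ a = (b.1, !b.2) := by
  constructor <;> (rintro rfl; simp)

def ReducedAvoidingRel {α : Type*} (x y a b : α × Bool) : Prop :=
  IsReducedStep a b ∧ (a, b) ≠ (x, y)

lemma isChain_reducedAvoidingRel {α : Type*} {x y : α × Bool} {L : List (α × Bool)}
    (hL : FreeGroup.IsReduced L) (hxy : ¬ [x, y] <:+: L) : L.IsChain (ReducedAvoidingRel x y) := by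
  rw [List.isChain_iff_forall_rel_of_append_cons_cons]
  rintro a b l₁ l₂ rfl
  refine ⟨List.isChain_iff_forall_rel_of_append_cons_cons.1 hL rfl, ?_⟩
  rintro ⟨⟩
  exact hxy ⟨l₁, l₂, by simp⟩

lemma exists_isCyclicallyReduced_append_singleton {α : Type*} [Fintype α]
    (hα : 2 ≤ Fintype.card α) {L : List (α × Bool)} (hL : FreeGroup.IsReduced L) :
    ∃ c, IsCyclicallyReduced (L ++ [c]) := by
  have : Nonempty α := Fintype.card_pos_iff.1 (by omega)
  cases L with
  | nil => exact ⟨Classical.arbitrary _, by simp⟩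
  | cons a L =>
    obtain ⟨b, hb⟩ : ∃ b, (a :: L).getLast? = some b :=
      ⟨_, List.getLast?_eq_getLast_of_ne_nil (List.cons_ne_nil _ _)⟩
    obtain ⟨c, -, hc⟩ := exists_mem_notMem_of_card_lt_card
      (s := {(b.1, !b.2), (a.1, !a.2)}) (t := univ) <| by
        rw [card_univ, Fintype.card_prod, Fintype.card_bool]
        exact card_le_two.trans_lt (by omega)
    simp only [mem_insert, mem_singleton, not_or] at hc
    refine ⟨c, ?_⟩
    rw [isCyclicallyReduced_cons_append_iff, FreeGroup.IsReduced, List.isChain_append]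
    refine ⟨⟨hL, List.isChain_singleton c, fun b' hb' c' hc' => ?_⟩, ?_⟩
    · obtain rfl : b = b' := by simpa [hb] using hb'
      obtain rfl : c = c' := by simpa using hc'
      exact (isReducedStep_iff_ne b c).2 hc.1
    · exact (isReducedStep_iff_ne c a).2 fun h => hc.2 (eq_inv_letter_comm.2 h)

section Letters

variable {α : Type*} [Fintype α]

def cyclicallyReducedWords (n : ℕ) : Finset (List (α × Bool)) :=
  {L ∈ wordsOfLength (α × Bool) n | IsCyclicallyReduced L}

lemma card_filter_isReducedStep (a : α × Bool) :
    #{b | IsReducedStep a b} = 2 * Fintype.card α - 1 := by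
  have : ({b | IsReducedStep a b} : Finset (α × Bool)) = univ.erase (a.1, !a.2) := by
    ext b; simp [isReducedStep_iff_ne]
  rw [this, card_erase_of_mem (mem_univ _), card_univ, Fintype.card_prod,
    Fintype.card_bool, mul_comm]

lemma pow_le_card_chainsOfLength_isReducedStep [Nonempty α] (n : ℕ) :
    (2 * Fintype.card α - 1) ^ n ≤
      #(chainsOfLength (IsReducedStep (α := α)) n) :=
  (pow_le_card_walksFrom (fun a => (card_filter_isReducedStep a).ge) (Classical.arbitrary _)
    n).trans (card_le_card (walksFrom_subset_chainsOfLength _ n))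

lemma card_chainsOfLength_isReducedStep_le (hα : 2 ≤ Fintype.card α) (n : ℕ) :
    #(chainsOfLength (IsReducedStep (α := α)) n) ≤
      #(cyclicallyReducedWords (α := α) (n + 1)) := by
  refine card_le_card_of_surjOn List.dropLast fun L hL => ?_
  obtain ⟨hlen, hred⟩ := mem_chainsOfLength.1 hL
  obtain ⟨c, hc⟩ := exists_isCyclicallyReduced_append_singleton hα hred
  exact ⟨L ++ [c], by simp [cyclicallyReducedWords, hlen, hc], List.dropLast_concat⟩

lemma card_walksFrom_reducedAvoidingRel_add_one_le (hα : 2 ≤ Fintype.card α)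
    {x y : α × Bool} (hxy : y ≠ (x.1, !x.2)) (h : α × Bool) :
    #(walksFrom (ReducedAvoidingRel x y) h 3) + 1 ≤ (2 * Fintype.card α - 1) ^ 3 := by
  refine card_walksFrom_three_add_one_le (by omega) (fun a => ?_) (x := x) ?_ ?_ h
  · grw [← card_filter_isReducedStep a]
    exact card_le_card fun b hb => mem_filter.2 ⟨mem_univ _, (mem_filter.1 hb).2.1⟩
  · have hsub : ({b | ReducedAvoidingRel x y x b} : Finset (α × Bool)) ⊆
        (univ.erase (x.1, !x.2)).erase y := fun b hb => by
      obtain ⟨-, hxb, hb⟩ := mem_filter.1 hb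
      rw [isReducedStep_iff_ne] at hxb
      simp only [mem_erase, mem_univ, and_true]
      exact ⟨fun hby => hb (by rw [hby]), hxb⟩
    grw [card_le_card hsub, card_erase_of_mem (mem_erase.2 ⟨hxy, mem_univ _⟩),
      card_erase_of_mem (mem_univ _), card_univ, Fintype.card_prod, Fintype.card_bool]
    omega
  · have hsub : ({c | ¬ ReducedAvoidingRel x y c x} : Finset (α × Bool)) ⊆
        {(x.1, !x.2), x} := fun c hc => by
      rw [mem_filter, ReducedAvoidingRel, isReducedStep_iff_ne] at hc
      simp only [mem_univ, true_and, not_and_or, not_or, not_not, ne_eq, Prod.mk.injEq] at hc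
      simp only [mem_insert, mem_singleton]
      exact hc.imp eq_inv_letter_comm.1 And.left
    exact (card_le_card hsub).trans card_le_two

lemma exists_card_chainsOfLength_reducedAvoidingRel_le {α : Type*} [Fintype α]
    (hα : 2 ≤ Fintype.card α) {x y : α × Bool} (hxy : y ≠ (x.1, !x.2)) {μ : ℝ} (hμ : 1 ≤ μ)
    (hμ3 : ((2 * Fintype.card α - 1 : ℕ) : ℝ) ^ 3 - 1 ≤ μ ^ 3) :
    ∃ B : ℝ, ∀ n, (#(chainsOfLength (ReducedAvoidingRel x y) n) : ℝ) ≤ B * μ ^ n := by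
  have hM : (((2 * Fintype.card α - 1) ^ 3 - 1 : ℕ) : ℝ) ≤ μ ^ 3 := by
    rw [Nat.cast_sub (Nat.one_le_pow _ _ (by omega))]
    exact_mod_cast hμ3
  exact ⟨_, le_sum_mul_pow_of_add_le three_pos hμ hM fun n hn => card_chainsOfLength_add_le
    (fun h => Nat.le_sub_one_of_lt (card_walksFrom_reducedAvoidingRel_add_one_le hα hxy h)) hn⟩

end Letters

section FreeGroupCounting

variable {r : ℕ}

lemma cyclicallyReduced_iff (w : F r) : CyclicallyReduced w ↔ IsCyclicallyReduced w.toWord := by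
  simp only [CyclicallyReduced, isCyclicallyReduced_iff, isReduced_toWord, true_and]
  rw [forall₂_comm]
  exact forall₂_congr fun a _ => forall₂_congr fun b _ =>
    (isReducedStep_iff_ne a b).symm

lemma finite_setOf_wlen_le (n : ℕ) : {w : F r | wlen w ≤ n}.Finite :=
  (List.finite_length_le _ n).preimage toWord_injective.injOn

lemma rho_le_sum_card_chainsOfLength {R : Fin r × Bool → Fin r × Bool → Prop} {S : Set (F r)}
    (hS : ∀ w ∈ S, w.toWord.IsChain R) (n : ℕ) :
    rho S n ≤ ∑ k ∈ range (n + 1), #(chainsOfLength R k) := by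
  calc rho S n ≤
        (((range (n + 1)).biUnion (chainsOfLength R) : Finset (List (Fin r × Bool))) :
          Set (List (Fin r × Bool))).ncard := by
        refine Set.ncard_le_ncard_of_injOn toWord (fun w hw => ?_) toWord_injective.injOn
          (finite_toSet _)
        simp only [coe_biUnion, coe_range, Set.mem_Iio, mem_coe, mem_chainsOfLength,
          Set.mem_iUnion, exists_prop]
        exact ⟨wlen w, Nat.lt_succ_of_le hw.2, rfl, hS w hw.1⟩
    _ ≤ ∑ k ∈ range (n + 1), #(chainsOfLength R k) := by
        rw [Set.ncard_coe_finset]; exact card_biUnion_le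

lemma card_cyclicallyReducedWords_le_rho (n : ℕ) :
    #(cyclicallyReducedWords (α := Fin r) n) ≤ rho (Ur r) n := by
  have htoWord : ∀ L ∈ cyclicallyReducedWords (α := Fin r) n, (mk L).toWord = L :=
    fun L hL => by
      rw [toWord_mk, ((mem_filter.1 hL).2.isReduced).reduce_eq]
  rw [← Set.ncard_coe_finset]
  refine Set.ncard_le_ncard_of_injOn mk (fun L hL => ?_) (fun L hL L' hL' h => ?_)
    ((finite_setOf_wlen_le n).subset fun w hw => hw.2)
  · obtain ⟨hlen, hcyc⟩ := mem_filter.1 hL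
    refine ⟨(cyclicallyReduced_iff _).2 ?_, ?_⟩
    · rw [htoWord L hL]; exact hcyc
    · simp [wlen, htoWord L hL, (mem_wordsOfLength.1 hlen)]
  · rw [← htoWord L hL, ← htoWord L' hL', h]

lemma pow_le_mul_rho_Ur (hr : 2 ≤ r) (n : ℕ) : (2 * r - 1) ^ n ≤ (2 * r - 1) * rho (Ur r) n := by
  have hr' : 2 ≤ Fintype.card (Fin r) := by simpa using hr
  have : Nonempty (Fin r) := ⟨⟨0, by omega⟩⟩
  cases n with
  | zero =>
    have hnil : [] ∈ cyclicallyReducedWords (α := Fin r) 0 := by simp [cyclicallyReducedWords]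
    have := (card_pos.2 ⟨_, hnil⟩).trans_le (card_cyclicallyReducedWords_le_rho 0)
    simp only [pow_zero]
    exact Nat.one_le_iff_ne_zero.2 (Nat.mul_ne_zero (by omega) this.ne')
  | succ n =>
    rw [pow_succ']
    refine Nat.mul_le_mul_left _ ?_
    simpa using (pow_le_card_chainsOfLength_isReducedStep n).trans
      ((card_chainsOfLength_isReducedStep_le hr' n).trans (card_cyclicallyReducedWords_le_rho _))

lemma expNegligibleIn_of_le_pow {S Z : Set (F r)} {A c μ ν : ℝ} (hμ : 0 < μ)
    (hμν : μ < ν) (hS : ∀ n, (rho S n : ℝ) ≤ A * μ ^ n) (hZ : ∀ n, ν ^ n ≤ c * rho Z n) :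
    ExpNegligibleIn S Z := by
  have hν : 0 < ν := hμ.trans hμν
  have hA : 0 ≤ A := by simpa using (Nat.cast_nonneg _).trans (hS 0)
  have hc : 0 ≤ c := by
    have := (pow_pos hν 0).trans_le (hZ 0)
    exact (pos_of_mul_pos_left this (Nat.cast_nonneg _)).le
  refine ⟨A * c + 1, by positivity, μ / ν, by positivity, (div_lt_one hν).2 hμν, fun n => ?_⟩
  have hZpos : 0 < (rho Z n : ℝ) :=
    pos_of_mul_pos_right ((pow_pos hν n).trans_le (hZ n)) hc
  rw [sub_zero, abs_of_nonneg (by positivity), div_le_iff₀ hZpos]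
  calc (rho S n : ℝ) ≤ A * (μ / ν) ^ n * ν ^ n := by
        rw [div_pow, mul_assoc, div_mul_cancel₀ _ (pow_pos hν n).ne']
        exact hS n
    _ ≤ A * (μ / ν) ^ n * (c * rho Z n) := by gcongr; exact hZ n
    _ ≤ (A * c + 1) * (μ / ν) ^ n * rho Z n := by
        nlinarith [pow_pos (div_pos hμ hν) n, hZpos]

lemma exists_rho_le_mul_pow_of_isChain (hr : 2 ≤ r) {x y : Fin r × Bool}
    (hxy : y ≠ (x.1, !x.2)) {S : Set (F r)}
    (hS : ∀ w ∈ S, w.toWord.IsChain (ReducedAvoidingRel x y)) {μ : ℝ} (hμ : 1 < μ)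
    (hμ3 : ((2 * r - 1 : ℕ) : ℝ) ^ 3 - 1 ≤ μ ^ 3) :
    ∃ A : ℝ, ∀ n, (rho S n : ℝ) ≤ A * μ ^ n := by
  obtain ⟨B, hB⟩ := exists_card_chainsOfLength_reducedAvoidingRel_le (by simpa using hr) hxy
    hμ.le (by simpa using hμ3)
  have hB0 : 0 ≤ B := by simpa using (Nat.cast_nonneg _).trans (hB 0)
  refine ⟨B * (μ / (μ - 1)), fun n => ?_⟩
  calc (rho S n : ℝ) ≤ ∑ k ∈ range (n + 1), (#(chainsOfLength (ReducedAvoidingRel x y) k) : ℝ) := by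
        exact_mod_cast rho_le_sum_card_chainsOfLength hS n
    _ ≤ ∑ k ∈ range (n + 1), B * μ ^ k := sum_le_sum fun k _ => hB k
    _ ≤ B * (μ / (μ - 1)) * μ ^ n := by
        rw [← mul_sum, mul_assoc]
        exact mul_le_mul_of_nonneg_left (sum_range_succ_pow_le hμ n) hB0

end FreeGroupCounting

/-- For every freely reduced two-letter word `z = xy`, the set of
cyclically reduced words containing `z` as a subword is exponentially generic in `U_r`. -/
theorem generic_contains_two_letter_subword (r : ℕ) (hr : 2 ≤ r)
    (x y : Fin r × Bool) (hxy : y ≠ (x.1, !x.2)) :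
    ExpGenericIn {w : F r | CyclicallyReduced w ∧ [x, y] <:+: FreeGroup.toWord w}
      (Ur r) := by
  have hq : (3 : ℝ) ≤ ((2 * r - 1 : ℕ) : ℝ) := by exact_mod_cast (by omega : 3 ≤ 2 * r - 1)
  obtain ⟨μ, hμ1, hμq, hμ3⟩ := exists_one_lt_lt_pow_eq (k := 3) three_ne_zero
    (M := ((2 * r - 1 : ℕ) : ℝ) ^ 3 - 1) (by nlinarith [pow_le_pow_left₀ (by norm_num) hq 3])
    (by linarith) (by linarith)
  have havoid : ∀ w ∈ Ur r \ {w : F r | CyclicallyReduced w ∧ [x, y] <:+: w.toWord},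
      w.toWord.IsChain (ReducedAvoidingRel x y) := fun w hw =>
    isChain_reducedAvoidingRel isReduced_toWord fun h => hw.2 ⟨hw.1, h⟩
  obtain ⟨A, hA⟩ := exists_rho_le_mul_pow_of_isChain hr hxy havoid hμ1 hμ3.ge
  exact expNegligibleIn_of_le_pow (c := ((2 * r - 1 : ℕ) : ℝ)) (by linarith) hμq hA
    fun n => by exact_mod_cast pow_le_mul_rho_Ur hr n
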